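/- Fix p ∈ (0,1) and α_max(p) := Φ⁻¹(1 − p/2). Among all measurable sets A ⊆ ℝ with Gaussian measure ∫_A φ(t)dt = p, the maximum of ∫_A t²·φ(t)dt equals p + 2·α_max(p)·φ(α_max(p)), attained (up to null sets) by A = (−∞, −α_max(p)] ∪ [α_max(p), ∞). -/

import Mathlib

/-!
Bathtub principle: let `B = (-∞, -α] ∪ [α, ∞)`, where `t² ≥ α²`. If `A` has the same
Gaussian mass as `B`, then `A \ B` and `B \ A` have equal mass, and `t² ≤ α² ≤ s²` for
`t ∈ A \ B`, `s ∈ B \ A`; hence `∫_A t²φ ≤ ∫_B t²φ`. The value on `B` comes from integrating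
`(-tφ(t))' = (t² - 1)φ(t)` over each tail.
-/

open MeasureTheory

/-- Standard normal pdf. -/
noncomputable def gpdf (x : ℝ) : ℝ := (Real.sqrt (2 * Real.pi))⁻¹ * Real.exp (-x ^ 2 / 2)

/-- Standard normal cdf. -/
noncomputable def gcdf (x : ℝ) : ℝ := ∫ t in Set.Iic x, gpdf t

open Set Filter Real ProbabilityTheory Topology

section Bathtub

variable {X : Type*} [MeasurableSpace X] {μ : Measure X} {A B : Set X}

theorem setIntegral_le_setIntegral_of_sdiff {f : X → ℝ} (hA : MeasurableSet A)
    (hB : MeasurableSet B) (hf : Integrable f μ) (hAB : ∀ x ∈ A \ B, f x ≤ 0)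
    (hBA : ∀ x ∈ B \ A, 0 ≤ f x) : ∫ x in A, f x ∂μ ≤ ∫ x in B, f x ∂μ := by
  rw [← integral_inter_add_sdiff hB hf.integrableOn (s := A),
    ← integral_inter_add_sdiff hA hf.integrableOn (s := B), inter_comm]
  linarith [setIntegral_nonpos (μ := μ) (hA.diff hB) hAB,
    setIntegral_nonneg (μ := μ) (hB.diff hA) hBA]

theorem setIntegral_mul_le_setIntegral_mul_of_setIntegral_eq {g w : X → ℝ} (c : ℝ)
    (hA : MeasurableSet A) (hB : MeasurableSet B) (hw : Integrable w μ)
    (hgw : Integrable (fun x ↦ g x * w x) μ) (hw_nonneg : ∀ x, 0 ≤ w x)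
    (hAB : ∀ x ∈ A \ B, g x ≤ c) (hBA : ∀ x ∈ B \ A, c ≤ g x)
    (hmass : ∫ x in A, w x ∂μ = ∫ x in B, w x ∂μ) :
    ∫ x in A, g x * w x ∂μ ≤ ∫ x in B, g x * w x ∂μ := by
  have hshift : ∀ S : Set X, ∫ x in S, (g x * w x - c * w x) ∂μ =
      ∫ x in S, g x * w x ∂μ - c * ∫ x in S, w x ∂μ := fun S ↦ by
    rw [integral_sub hgw.integrableOn (hw.const_mul c).integrableOn, integral_const_mul]
  have key := setIntegral_le_setIntegral_of_sdiff (f := fun x ↦ g x * w x - c * w x) hA hB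
    (hgw.sub (hw.const_mul c))
    (fun x hx ↦ by linarith [mul_nonneg (sub_nonneg.2 (hAB x hx)) (hw_nonneg x)])
    (fun x hx ↦ by linarith [mul_nonneg (sub_nonneg.2 (hBA x hx)) (hw_nonneg x)])
  rw [hshift, hshift, hmass] at key
  linarith

end Bathtub

theorem integral_Iic_neg_eq_integral_Ioi {f : ℝ → ℝ} (hf : ∀ x, f (-x) = f x) (a : ℝ) :
    ∫ x in Iic (-a), f x = ∫ x in Ioi a, f x := by
  simp_rw [← integral_comp_neg_Ioi, hf]

theorem integral_Iic_neg_union_Ici_eq_two_mul {f : ℝ → ℝ} (hf : ∀ x, f (-x) = f x)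
    (hfi : Integrable f) {a : ℝ} (ha : 0 < a) :
    ∫ x in Iic (-a) ∪ Ici a, f x = 2 * ∫ x in Ioi a, f x := by
  rw [setIntegral_union (Iic_disjoint_Ici.2 (by linarith)) measurableSet_Ici hfi.integrableOn
    hfi.integrableOn, integral_Iic_neg_eq_integral_Ioi hf, integral_Ici_eq_integral_Ioi, two_mul]

theorem gpdf_eq_gaussianPDFReal : gpdf = gaussianPDFReal 0 1 := by
  ext x
  simp [gpdf, gaussianPDFReal]

theorem gpdf_nonneg (x : ℝ) : 0 ≤ gpdf x := by
  unfold gpdf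
  positivity

theorem gpdf_neg (x : ℝ) : gpdf (-x) = gpdf x := by
  rw [gpdf, gpdf, neg_sq]

theorem integrable_gpdf : Integrable gpdf := by
  rw [gpdf_eq_gaussianPDFReal]
  exact integrable_gaussianPDFReal 0 1

theorem integral_gpdf : ∫ x, gpdf x = 1 := by
  rw [gpdf_eq_gaussianPDFReal]
  exact integral_gaussianPDFReal_eq_one 0 one_ne_zero

theorem integrable_pow_mul_gpdf (n : ℕ) : Integrable fun x : ℝ ↦ x ^ n * gpdf x := by
  have h := (integrable_rpow_mul_exp_neg_mul_sq (b := 1 / 2) (by norm_num) (s := n)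
    (by linarith [n.cast_nonneg (α := ℝ)])).const_mul (√(2 * π))⁻¹
  refine h.congr (ae_of_all _ fun x ↦ ?_)
  simp only [rpow_natCast, gpdf, show -(1 / 2) * x ^ 2 = -x ^ 2 / 2 by ring]
  ring

theorem hasDerivAt_gpdf (x : ℝ) : HasDerivAt gpdf (-x * gpdf x) x := by
  have h := (((hasDerivAt_pow 2 x).neg.div_const 2).exp).const_mul (√(2 * π))⁻¹
  refine h.congr_deriv ?_
  simp only [gpdf, Pi.neg_apply]
  push_cast
  ring

theorem hasDerivAt_neg_mul_gpdf (x : ℝ) :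
    HasDerivAt (fun t ↦ -t * gpdf t) (x ^ 2 * gpdf x - gpdf x) x := by
  refine ((hasDerivAt_neg x).mul (hasDerivAt_gpdf x)).congr_deriv ?_
  ring

theorem integral_Ioi_sq_mul_gpdf (a : ℝ) :
    ∫ t in Ioi a, t ^ 2 * gpdf t = a * gpdf a + ∫ t in Ioi a, gpdf t := by
  have hint : IntegrableOn (fun t ↦ t ^ 2 * gpdf t - gpdf t) (Ioi a) :=
    ((integrable_pow_mul_gpdf 2).sub integrable_gpdf).integrableOn
  have hlim : Tendsto (fun t ↦ -t * gpdf t) atTop (𝓝 0) :=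
    tendsto_zero_of_hasDerivAt_of_integrableOn_Ioi (fun x _ ↦ hasDerivAt_neg_mul_gpdf x) hint
      (by simpa using (integrable_pow_mul_gpdf 1).neg.integrableOn)
  have h := integral_Ioi_of_hasDerivAt_of_tendsto' (fun x _ ↦ hasDerivAt_neg_mul_gpdf x) hint hlim
  rw [integral_sub (integrable_pow_mul_gpdf 2).integrableOn integrable_gpdf.integrableOn] at h
  linarith

theorem gcdf_add_integral_Ioi (a : ℝ) : gcdf a + ∫ t in Ioi a, gpdf t = 1 := by
  rw [gcdf, intervalIntegral.integral_Iic_add_Ioi integrable_gpdf.integrableOn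
    integrable_gpdf.integrableOn, integral_gpdf]

theorem gcdf_zero : gcdf 0 = 1 / 2 := by
  have h := gcdf_add_integral_Ioi 0
  rw [← integral_Iic_neg_eq_integral_Ioi gpdf_neg, neg_zero, ← gcdf] at h
  linarith

theorem gcdf_mono : Monotone gcdf := fun _ _ hxy ↦
  setIntegral_mono_set integrable_gpdf.integrableOn (ae_of_all _ gpdf_nonneg)
    (Iic_subset_Iic.2 hxy).eventuallyLE

/-- Fix p ∈ (0,1) and α = Φ⁻¹(1 − p/2), i.e. Φ(α) = 1 − p/2.
Among all measurable A ⊆ ℝ with Gaussian measure ∫_A φ = p, the maximum of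
∫_A t²φ(t)dt equals p + 2αφ(α), attained by A = (−∞, −α] ∪ [α, ∞). -/
theorem stmt11 (p : ℝ) (hp : p ∈ Set.Ioo (0 : ℝ) 1) (α : ℝ)
    (hα : gcdf α = 1 - p / 2) :
    (∀ A : Set ℝ, MeasurableSet A → (∫ t in A, gpdf t) = p →
        (∫ t in A, t ^ 2 * gpdf t) ≤ p + 2 * α * gpdf α) ∧
      (∫ t in Set.Iic (-α) ∪ Set.Ici α, gpdf t) = p ∧
      (∫ t in Set.Iic (-α) ∪ Set.Ici α, t ^ 2 * gpdf t) = p + 2 * α * gpdf α := by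
  have hα_pos : 0 < α := gcdf_mono.reflect_lt (by rw [gcdf_zero, hα]; linarith [hp.2])
  have htail : ∫ t in Ioi α, gpdf t = p / 2 := by linarith [gcdf_add_integral_Ioi α]
  have hmass : ∫ t in Iic (-α) ∪ Ici α, gpdf t = p := by
    rw [integral_Iic_neg_union_Ici_eq_two_mul gpdf_neg integrable_gpdf hα_pos, htail]
    ring
  have hsecond : ∫ t in Iic (-α) ∪ Ici α, t ^ 2 * gpdf t = p + 2 * α * gpdf α := by
    rw [integral_Iic_neg_union_Ici_eq_two_mul (fun t ↦ by rw [neg_sq, gpdf_neg])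
      (integrable_pow_mul_gpdf 2) hα_pos, integral_Ioi_sq_mul_gpdf, htail]
    ring
  refine ⟨fun A hA hAp ↦ ?_, hmass, hsecond⟩
  rw [← hsecond]
  refine setIntegral_mul_le_setIntegral_mul_of_setIntegral_eq (α ^ 2) hA
    (measurableSet_Iic.union measurableSet_Ici) integrable_gpdf (integrable_pow_mul_gpdf 2)
    gpdf_nonneg ?_ ?_ (hAp.trans hmass.symm)
  · rintro t ⟨-, ht⟩
    simp only [mem_union, mem_Iic, mem_Ici, not_or, not_le] at ht
    nlinarith
  · rintro t ⟨ht | ht, -⟩ <;> simp only [mem_Iic, mem_Ici] at ht <;> nlinarith
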